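/- Let S = {B, C} and consider the conditional multiset rewriting system M = (X, M₀, ζ) with M₀ = ∅, X = {μ₁ : ∅ → {B}, μ₂ : ∅ → {C}, ε}, ζ(μ₁) = {{C}} and ζ(μ₂) = {{B}}. Then for every concurrent-free multiset rewriting system M' over S, the set of runs of M differs from the set of runs of M'. Consequently, the inclusion of the generative power of concurrent-free MRS in that of conditional MRS is strict. -/
import Mathlib


/-- A multiset over a set of elements `S`, given by multiplicities. -/
abbrev MSet (S : Type) := S → ℕ

/-- Submultiset relation (pointwise `≤`). -/
def MSub {S : Type} (A M : MSet S) : Prop := ∀ s, A s ≤ M s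

/-- A multiset rewriting rule `μ = (•μ, μ•)`. -/
abbrev Rule (S : Type) := MSet S × MSet S

/-- The empty rule `ε = (∅, ∅)`. -/
def epsRule (S : Type) : Rule S := (fun _ => 0, fun _ => 0)

/-- A rule is enabled at `M` when its left-hand side is a submultiset of `M`. -/
def Enabled {S : Type} (μ : Rule S) (M : MSet S) : Prop := MSub μ.1 M

/-- The multiset `(M \ •μ) ∪ μ•` obtained by applying a rule. -/
def ApplyRule {S : Type} (μ : Rule S) (M : MSet S) : MSet S :=
  fun s => M s - μ.1 s + μ.2 s

/-- A single rewriting step of the rule set `X`: the rule belongs to `X`,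
is enabled, produces `M'`, and the empty rule `ε` is applied only when no
other rule of `X` is enabled. -/
def MStep {S : Type} (X : Set (Rule S)) (M : MSet S) (μ : Rule S) (M' : MSet S) : Prop :=
  μ ∈ X ∧ Enabled μ M ∧ M' = ApplyRule μ M ∧
    (μ = epsRule S → ∀ ν ∈ X, ν ≠ epsRule S → ¬ Enabled ν M)

/-- A multiset rewriting system over `S`: a finite set of rules containing
the empty rule, together with an initial multiset. -/
structure MRS (S : Type) where
  X : Set (Rule S)
  finX : X.Finite
  M0 : MSet S
  eps_mem : epsRule S ∈ X

/-- `π` is a run of `M` with run label `lbl`, where `lbl i` is the rule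
applied in step `i + 1` (the paper's `π⃗[i+1]`, rewriting `π i` to `π (i+1)`). -/
def IsRunWith {S : Type} (M : MRS S) (π : ℕ → MSet S) (lbl : ℕ → Rule S) : Prop :=
  π 0 = M.M0 ∧ ∀ i, MStep M.X (π i) (lbl i) (π (i + 1))

/-- The semantics of an unregulated MRS: its set of runs (labels disregarded). -/
def runs {S : Type} (M : MRS S) : Set (ℕ → MSet S) :=
  { π | ∃ lbl, IsRunWith M π lbl }

/-- Runs of the conditional MRS `(X, M₀, ζ)`: for every `i > 0` and every
prohibited context `A ∈ ζ (π⃗[i])`, `A` is not a submultiset of `π[i-1]`. -/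
def conditionalRuns {S : Type} (M : MRS S) (ζ : Rule S → Set (MSet S)) :
    Set (ℕ → MSet S) :=
  { π | ∃ lbl, IsRunWith M π lbl ∧ ∀ i, ∀ A ∈ ζ (lbl i), ¬ MSub A (π i) }

/-- Two rules are concurrent iff their left-hand sides share an element. -/
def Concurrent {S : Type} (μ ν : Rule S) : Prop := ∃ s, 0 < μ.1 s ∧ 0 < ν.1 s

/-- A valid concurrent-free regulation: an irreflexive relation on the rules
of `X` relating only concurrent rules, such that `(μ, ν) ∈ ζ` implies that
`(ν, μ)` is not in the transitive closure of `ζ`. -/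
def CFValid {S : Type} (X : Set (Rule S)) (ζ : Rule S → Rule S → Prop) : Prop :=
  (∀ μ, ¬ ζ μ μ) ∧ (∀ μ ν, ζ μ ν → μ ∈ X ∧ ν ∈ X ∧ Concurrent μ ν) ∧
    ∀ μ ν, ζ μ ν → ¬ Relation.TransGen ζ ν μ

/-- Runs of the concurrent-free MRS `(X, M₀, ζ)`: for every `i > 0` and every
rule `μ ∈ X` enabled at `π[i]`, `(π⃗[i+1], μ) ∉ ζ`. -/
def cfRuns {S : Type} (M : MRS S) (ζ : Rule S → Rule S → Prop) :
    Set (ℕ → MSet S) :=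
  { π | ∃ lbl, IsRunWith M π lbl ∧
      ∀ i, ∀ μ ∈ M.X, Enabled μ (π (i + 1)) → ¬ ζ (lbl (i + 1)) μ }

/-- `μ₁ : ∅ → {B}` over `S = {B, C}` (`B = 0`, `C = 1`). -/
def mu1 : Rule (Fin 2) := (![0, 0], ![1, 0])

/-- `μ₂ : ∅ → {C}`. -/
def mu2 : Rule (Fin 2) := (![0, 0], ![0, 1])

/-- The MRS with `M₀ = ∅` and `X = {μ₁, μ₂, ε}`. -/
def Mcond : MRS (Fin 2) where
  X := {mu1, mu2, epsRule (Fin 2)}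
  finX := Set.toFinite _
  M0 := ![0, 0]
  eps_mem := by simp

/-- The conditional regulation with `ζ(μ₁) = {{C}}` and `ζ(μ₂) = {{B}}`. -/
def zetaCond : Rule (Fin 2) → Set (MSet (Fin 2)) :=
  fun μ => { A | (μ = mu1 ∧ A = ![0, 1]) ∨ (μ = mu2 ∧ A = ![1, 0]) }

lemma mu1_ne_eps : mu1 ≠ epsRule (Fin 2) := by
  intro h
  have := congrFun (congrArg Prod.snd h) 0
  simp [mu1, epsRule] at this

lemma mu2_ne_eps : mu2 ≠ epsRule (Fin 2) := by
  intro h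
  have := congrFun (congrArg Prod.snd h) 1
  simp [mu2, epsRule] at this

lemma mu1_ne_mu2 : mu1 ≠ mu2 := by
  intro h
  have := congrFun (congrArg Prod.snd h) 0
  simp [mu1, mu2] at this

lemma lhs_zero {μ : Rule (Fin 2)} (h : Enabled μ ![0, 0]) : ∀ s, μ.1 s = 0 := by
  intro s
  have h2 := h s
  fin_cases s <;> simpa using h2

lemma runB : (fun i => (![i, 0] : MSet (Fin 2))) ∈ conditionalRuns Mcond zetaCond := by
  refine ⟨fun _ => mu1, ⟨rfl, ?_⟩, ?_⟩
  · intro i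
    refine ⟨by simp [Mcond], ?_, ?_, fun h => absurd h mu1_ne_eps⟩
    · intro s; fin_cases s <;> simp [mu1]
    · funext s; fin_cases s <;> simp [ApplyRule, mu1]
  · intro i A hA hsub
    rcases hA with ⟨_, rfl⟩ | ⟨h, _⟩
    · have := hsub 1; simp at this
    · exact mu1_ne_mu2 h

lemma runC : (fun i => (![(0 : ℕ), i] : MSet (Fin 2))) ∈ conditionalRuns Mcond zetaCond := by
  refine ⟨fun _ => mu2, ⟨rfl, ?_⟩, ?_⟩
  · intro i
    refine ⟨by simp [Mcond], ?_, ?_, fun h => absurd h mu2_ne_eps⟩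
    · intro s; fin_cases s <;> simp [mu2]
    · funext s; fin_cases s <;> simp [ApplyRule, mu2]
  · intro i A hA hsub
    rcases hA with ⟨h, _⟩ | ⟨_, rfl⟩
    · exact mu1_ne_mu2 h.symm
    · have := hsub 0; simp at this

/-- For every concurrent-free MRS `M'` over `S = {B, C}`, the set of runs of
the conditional MRS `(X, M₀, ζ)` above differs from the set of runs of `M'`:
the inclusion of concurrent-free in conditional generative power is strict. -/
theorem conditional_not_subsumed_by_cf :
    ∀ (M' : MRS (Fin 2)) (ζ' : Rule (Fin 2) → Rule (Fin 2) → Prop),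
      CFValid M'.X ζ' → cfRuns M' ζ' ≠ conditionalRuns Mcond zetaCond := by
  intro M' ζ' hvalid heq
  have hB := runB; have hC := runC
  rw [← heq] at hB hC
  obtain ⟨lblB, ⟨hB0, hBstep⟩, _⟩ := hB
  obtain ⟨lblC, ⟨hC0, hCstep⟩, _⟩ := hC
  set νC := lblC 0 with hνC
  have hC1 : MStep M'.X ![0, 0] νC ![0, 1] := hCstep 0
  obtain ⟨hmemC, henC, happC, _⟩ := hC1
  have hνC1 : ∀ s, νC.1 s = 0 := lhs_zero henC
  have hνC2 : ∀ s, νC.2 s = (![0, 1] : MSet (Fin 2)) s := by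
    intro s
    have h := congrFun happC s
    simp only [ApplyRule, hνC1 s, Nat.sub_zero] at h
    fin_cases s <;> simpa using h.symm
  have hνCeps : νC ≠ epsRule (Fin 2) := by
    intro h
    have := hνC2 1
    rw [h] at this
    simp [epsRule] at this
  -- the mixed run: ∅, {B}, {B,C}, {B,2C}, ...
  set π : ℕ → MSet (Fin 2) :=
    fun n => Nat.rec (![0, 0] : MSet (Fin 2)) (fun k _ => ![1, k]) n with hπ
  have hmix : π ∈ cfRuns M' ζ' := by
    refine ⟨fun n => if n = 0 then lblB 0 else νC, ⟨hB0, ?_⟩, ?_⟩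
    · intro i
      cases i with
      | zero =>
        simp only [if_pos rfl]
        exact hBstep 0
      | succ n =>
        have hif : (fun n => if n = 0 then lblB 0 else νC) (n + 1) = νC :=
          if_neg (Nat.succ_ne_zero n)
        rw [hif]
        refine ⟨hmemC, fun s => by rw [hνC1 s]; exact Nat.zero_le _, ?_,
          fun h => absurd h hνCeps⟩
        show (![1, n + 1] : MSet (Fin 2)) = ApplyRule νC ![1, n]
        funext s
        simp only [ApplyRule, hνC1, Nat.sub_zero, hνC2]
        fin_cases s <;> simp
    · intro i μ hμ hen hζ
      have hc : Concurrent (if i + 1 = 0 then lblB 0 else νC) μ :=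
        (hvalid.2.1 _ _ hζ).2.2
      rw [if_neg (Nat.succ_ne_zero i)] at hc
      obtain ⟨s, hs, _⟩ := hc
      rw [hνC1 s] at hs
      exact Nat.lt_irrefl 0 hs
  rw [heq] at hmix
  obtain ⟨l, ⟨_, hstep⟩, hcond⟩ := hmix
  have h1 : MStep Mcond.X ![1, 0] (l 1) ![1, 1] := hstep 1
  obtain ⟨hmem, _, happ, _⟩ := h1
  have hmem' : l 1 = mu1 ∨ l 1 = mu2 ∨ l 1 = epsRule (Fin 2) := by
    simpa [Mcond] using hmem
  rcases hmem' with h | h | h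
  · rw [h] at happ
    have := congrFun happ 1
    simp [ApplyRule, mu1] at this
  · have := hcond 1 ![1, 0] (by rw [h]; exact Or.inr ⟨rfl, rfl⟩)
    exact this fun s => le_refl _
  · rw [h] at happ
    have := congrFun happ 1
    simp [ApplyRule, epsRule] at this
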